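/- arXiv:2310.06171 — 3 statements merged into one kernel-verified Lean document; each statement's English description precedes it below -/
import Mathlib

section
/- In an episodic MDP with horizon H and rewards in [0,1], if the population total-variation risk between learned policy π̂ and expert π* satisfies T(π̂,π*) ≤ ε, then the sub-optimality gap satisfies J(π*) − J(π̂) ≤ min{H, H²·ε}. -/
/-- Total variation distance between two distributions on a finite action set. -/
noncomputable def tvDist {A : Type*} [Fintype A] (p q : A → ℝ) : ℝ :=
  (1 / 2) * ∑ a, |p a - q a|

/-- State distribution at time `t` induced by rolling out policy `π` from initial
distribution `init` in an MDP with transition kernel `P`. -/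
noncomputable def stateDist {S A : Type*} [Fintype S] [Fintype A]
    (P : S → A → S → ℝ) (π : S → A → ℝ) (init : S → ℝ) : ℕ → S → ℝ
  | 0 => init
  | t + 1 => fun s' => ∑ s, ∑ a, stateDist P π init t s * π s a * P s a s'

/-- Expected cumulative reward of policy `π` over horizon `H`. -/
noncomputable def expReturn {S A : Type*} [Fintype S] [Fintype A]
    (P : S → A → S → ℝ) (R : S → A → ℝ) (π : S → A → ℝ) (init : S → ℝ) (H : ℕ) : ℝ :=
  ∑ t ∈ Finset.range H, ∑ s, ∑ a, stateDist P π init t s * π s a * R s a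

lemma sum_mul_le_half_abs {A : Type*} [Fintype A] (x r : A → ℝ)
    (hx : ∑ a, x a = 0) (hr : ∀ a, r a ∈ Set.Icc (0:ℝ) 1) :
    ∑ a, x a * r a ≤ (1/2) * ∑ a, |x a| := by
  have h1 : ∀ a ∈ Finset.univ, x a * r a ≤ (x a + |x a|)/2 := by
    intro a _
    rcases le_or_gt 0 (x a) with h | h
    · rw [abs_of_nonneg h]; nlinarith [(hr a).1, (hr a).2]
    · rw [abs_of_neg h]; nlinarith [(hr a).1, (hr a).2]
  calc ∑ a, x a * r a ≤ ∑ a, (x a + |x a|)/2 := Finset.sum_le_sum h1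
    _ = ((∑ a, x a) + ∑ a, |x a|)/2 := by
        rw [← Finset.sum_div, Finset.sum_add_distrib]
    _ = (1/2) * ∑ a, |x a| := by rw [hx]; ring

lemma sd_nonneg {S A : Type*} [Fintype S] [Fintype A] (P : S → A → S → ℝ) (hP0 : ∀ s a s', 0 ≤ P s a s')
    (π : S → A → ℝ) (hπ0 : ∀ s a, 0 ≤ π s a) (init : S → ℝ) (hinit0 : ∀ s, 0 ≤ init s) :
    ∀ t s, 0 ≤ stateDist P π init t s := by
  intro t
  induction t with
  | zero => exact hinit0
  | succ t ih =>
    intro s'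
    apply Finset.sum_nonneg; intro s _
    apply Finset.sum_nonneg; intro a _
    exact mul_nonneg (mul_nonneg (ih s) (hπ0 s a)) (hP0 s a s')

lemma sd_sum_one {S A : Type*} [Fintype S] [Fintype A] (P : S → A → S → ℝ) (hP1 : ∀ s a, ∑ s', P s a s' = 1)
    (π : S → A → ℝ) (hπ1 : ∀ s, ∑ a, π s a = 1) (init : S → ℝ) (hinit1 : ∑ s, init s = 1) :
    ∀ t, ∑ s, stateDist P π init t s = 1 := by
  intro t
  induction t with
  | zero => exact hinit1
  | succ t ih =>
    show ∑ s', ∑ s, ∑ a, stateDist P π init t s * π s a * P s a s' = 1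
    rw [Finset.sum_comm]
    calc ∑ s, ∑ s', ∑ a, stateDist P π init t s * π s a * P s a s'
        = ∑ s, ∑ a, ∑ s', stateDist P π init t s * π s a * P s a s' := by
          congr 1; ext s; exact Finset.sum_comm
      _ = ∑ s, ∑ a, stateDist P π init t s * π s a := by
          congr 1; ext s; congr 1; ext a
          rw [← Finset.mul_sum, hP1, mul_one]
      _ = ∑ s, stateDist P π init t s := by
          congr 1; ext s; rw [← Finset.mul_sum, hπ1, mul_one]
      _ = 1 := ih

/-- If the population TV risk between `π̂` and the expert `π*` is at most ε, then the
sub-optimality gap is at most `min {H, H²·ε}`. -/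
theorem stmt_10 {S A : Type*} [Fintype S] [Fintype A] (H : ℕ) (hH : 0 < H)
    (P : S → A → S → ℝ) (hP0 : ∀ s a s', 0 ≤ P s a s') (hP1 : ∀ s a, ∑ s', P s a s' = 1)
    (R : S → A → ℝ) (hR : ∀ s a, R s a ∈ Set.Icc (0 : ℝ) 1)
    (init : S → ℝ) (hinit0 : ∀ s, 0 ≤ init s) (hinit1 : ∑ s, init s = 1)
    (pihat pistar : S → A → ℝ)
    (hphat0 : ∀ s a, 0 ≤ pihat s a) (hphat1 : ∀ s, ∑ a, pihat s a = 1)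
    (hpstar0 : ∀ s a, 0 ≤ pistar s a) (hpstar1 : ∀ s, ∑ a, pistar s a = 1)
    (ε : ℝ)
    (hTV : (1 / (H : ℝ)) * ∑ t ∈ Finset.range H,
        ∑ s, stateDist P pistar init t s * tvDist (pihat s) (pistar s) ≤ ε) :
    expReturn P R pistar init H - expReturn P R pihat init H ≤
      min (H : ℝ) ((H : ℝ) ^ 2 * ε) := by
  set f := stateDist P pistar init with hf
  set g := stateDist P pihat init with hg
  have hf0 := sd_nonneg P hP0 pistar hpstar0 init hinit0
  have hg0 := sd_nonneg P hP0 pihat hphat0 init hinit0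
  have hf1 := sd_sum_one P hP1 pistar hpstar1 init hinit1
  have hg1 := sd_sum_one P hP1 pihat hphat1 init hinit1
  set tv : S → ℝ := fun s => tvDist (pihat s) (pistar s) with htv
  set E : ℕ → ℝ := fun t => ∑ s, f t s * tv s with hE
  set D : ℕ → ℝ := fun t => ∑ s, |f t s - g t s| with hD
  have htv0 : ∀ s, 0 ≤ tv s := fun s => by
    apply mul_nonneg (by norm_num)
    exact Finset.sum_nonneg fun a _ => abs_nonneg _
  have hE0 : ∀ t, 0 ≤ E t := fun t =>
    Finset.sum_nonneg fun s _ => mul_nonneg (hf0 t s) (htv0 s)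
  -- recursion for D
  have hDrec : ∀ t, D (t+1) ≤ 2 * E t + D t := by
    intro t
    have step1 : D (t+1) ≤ ∑ s, ∑ a, |f t s * pistar s a - g t s * pihat s a| := by
      have h1 : ∀ s' : S, |f (t+1) s' - g (t+1) s'| ≤
          ∑ s, ∑ a, |f t s * pistar s a - g t s * pihat s a| * P s a s' := by
        intro s'
        have : f (t+1) s' - g (t+1) s' =
            ∑ s, ∑ a, (f t s * pistar s a - g t s * pihat s a) * P s a s' := by
          show (∑ s, ∑ a, f t s * pistar s a * P s a s')
              - (∑ s, ∑ a, g t s * pihat s a * P s a s') = _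
          rw [← Finset.sum_sub_distrib]
          congr 1; ext s
          rw [← Finset.sum_sub_distrib]
          congr 1; ext a; ring
        rw [this]
        calc |∑ s, ∑ a, (f t s * pistar s a - g t s * pihat s a) * P s a s'|
            ≤ ∑ s, |∑ a, (f t s * pistar s a - g t s * pihat s a) * P s a s'| :=
              Finset.abs_sum_le_sum_abs _ _
          _ ≤ ∑ s, ∑ a, |(f t s * pistar s a - g t s * pihat s a) * P s a s'| :=
              Finset.sum_le_sum fun s _ => Finset.abs_sum_le_sum_abs _ _
          _ = ∑ s, ∑ a, |f t s * pistar s a - g t s * pihat s a| * P s a s' := by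
              congr 1; ext s; congr 1; ext a
              rw [abs_mul, abs_of_nonneg (hP0 s a s')]
      calc D (t+1) ≤ ∑ s', ∑ s, ∑ a, |f t s * pistar s a - g t s * pihat s a| * P s a s' :=
            Finset.sum_le_sum fun s' _ => h1 s'
        _ = ∑ s, ∑ a, ∑ s', |f t s * pistar s a - g t s * pihat s a| * P s a s' := by
            rw [Finset.sum_comm]; congr 1; ext s; exact Finset.sum_comm
        _ = ∑ s, ∑ a, |f t s * pistar s a - g t s * pihat s a| := by
            congr 1; ext s; congr 1; ext a; rw [← Finset.mul_sum, hP1, mul_one]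
    have step2 : ∀ s, ∑ a, |f t s * pistar s a - g t s * pihat s a| ≤
        2 * (f t s * tv s) + |f t s - g t s| := by
      intro s
      have h2 : ∀ a ∈ Finset.univ, |f t s * pistar s a - g t s * pihat s a| ≤
          f t s * |pistar s a - pihat s a| + |f t s - g t s| * pihat s a := by
        intro a _
        have : f t s * pistar s a - g t s * pihat s a =
            f t s * (pistar s a - pihat s a) + (f t s - g t s) * pihat s a := by ring
        rw [this]
        calc |f t s * (pistar s a - pihat s a) + (f t s - g t s) * pihat s a|
            ≤ |f t s * (pistar s a - pihat s a)| + |(f t s - g t s) * pihat s a| :=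
              abs_add_le _ _
          _ = f t s * |pistar s a - pihat s a| + |f t s - g t s| * pihat s a := by
              rw [abs_mul, abs_mul, abs_of_nonneg (hf0 t s), abs_of_nonneg (hphat0 s a)]
      calc ∑ a, |f t s * pistar s a - g t s * pihat s a|
          ≤ ∑ a, (f t s * |pistar s a - pihat s a| + |f t s - g t s| * pihat s a) :=
            Finset.sum_le_sum h2
        _ = f t s * ∑ a, |pistar s a - pihat s a| + |f t s - g t s| * ∑ a, pihat s a := by
            rw [Finset.sum_add_distrib, Finset.mul_sum, Finset.mul_sum]
        _ = 2 * (f t s * tv s) + |f t s - g t s| := by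
            rw [hphat1, mul_one]
            have : tv s = (1/2) * ∑ a, |pistar s a - pihat s a| := by
              show tvDist (pihat s) (pistar s) = _
              unfold tvDist
              rw [Finset.sum_congr rfl (fun a _ => abs_sub_comm (pihat s a) (pistar s a))]
            rw [this]; ring
    calc D (t+1) ≤ ∑ s, ∑ a, |f t s * pistar s a - g t s * pihat s a| := step1
      _ ≤ ∑ s, (2 * (f t s * tv s) + |f t s - g t s|) :=
          Finset.sum_le_sum fun s _ => step2 s
      _ = 2 * E t + D t := by
          rw [Finset.sum_add_distrib, ← Finset.mul_sum]
  have hDbound : ∀ t, D t ≤ 2 * ∑ u ∈ Finset.range t, E u := by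
    intro t
    induction t with
    | zero =>
      simp only [Finset.range_zero, Finset.sum_empty, mul_zero]
      show ∑ s, |f 0 s - g 0 s| ≤ 0
      have : ∀ s : S, |f 0 s - g 0 s| = 0 := by
        intro s; show |init s - init s| = 0; simp
      simp [this]
    | succ t ih =>
      calc D (t+1) ≤ 2 * E t + D t := hDrec t
        _ ≤ 2 * E t + 2 * ∑ u ∈ Finset.range t, E u := by linarith
        _ = 2 * ∑ u ∈ Finset.range (t+1), E u := by rw [Finset.sum_range_succ]; ring
  -- per-step gap bound
  have hstep : ∀ t, (∑ s, ∑ a, f t s * pistar s a * R s a)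
      - (∑ s, ∑ a, g t s * pihat s a * R s a) ≤ E t + D t / 2 := by
    intro t
    have hsplit : (∑ s, ∑ a, f t s * pistar s a * R s a)
        - (∑ s, ∑ a, g t s * pihat s a * R s a)
        = (∑ s, ∑ a, f t s * (pistar s a - pihat s a) * R s a)
          + (∑ s, ∑ a, (f t s - g t s) * pihat s a * R s a) := by
      rw [← Finset.sum_sub_distrib, ← Finset.sum_add_distrib]
      congr 1; ext s
      rw [← Finset.sum_sub_distrib, ← Finset.sum_add_distrib]
      congr 1; ext a; ring
    rw [hsplit]
    have h1 : ∑ s, ∑ a, f t s * (pistar s a - pihat s a) * R s a ≤ E t := by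
      apply Finset.sum_le_sum
      intro s _
      have : ∑ a, f t s * (pistar s a - pihat s a) * R s a
          = f t s * ∑ a, (pistar s a - pihat s a) * R s a := by
        rw [Finset.mul_sum]; congr 1; ext a; ring
      rw [this]
      have hb : ∑ a, (pistar s a - pihat s a) * R s a ≤ tv s := by
        have := sum_mul_le_half_abs (fun a => pistar s a - pihat s a) (R s)
          (by rw [Finset.sum_sub_distrib, hpstar1, hphat1]; ring) (hR s)
        calc ∑ a, (pistar s a - pihat s a) * R s a
            ≤ (1/2) * ∑ a, |pistar s a - pihat s a| := this
          _ = tv s := by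
              show _ = tvDist (pihat s) (pistar s)
              unfold tvDist
              rw [Finset.sum_congr rfl (fun a _ => abs_sub_comm (pihat s a) (pistar s a))]
      exact mul_le_mul_of_nonneg_left hb (hf0 t s)
    have h2 : ∑ s, ∑ a, (f t s - g t s) * pihat s a * R s a ≤ D t / 2 := by
      have key := sum_mul_le_half_abs (A := S × A)
        (fun p => (f t p.1 - g t p.1) * pihat p.1 p.2) (fun p => R p.1 p.2)
        (by
          rw [Fintype.sum_prod_type]
          have : ∀ s : S, ∑ a, (f t s - g t s) * pihat s a = f t s - g t s := by
            intro s; rw [← Finset.mul_sum, hphat1, mul_one]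
          simp only [this]
          rw [Finset.sum_sub_distrib, hf1, hg1]; ring)
        (fun p => hR p.1 p.2)
      rw [Fintype.sum_prod_type] at key
      calc ∑ s, ∑ a, (f t s - g t s) * pihat s a * R s a
          ≤ (1/2) * ∑ p : S × A, |(f t p.1 - g t p.1) * pihat p.1 p.2| := key
        _ = D t / 2 := by
            rw [Fintype.sum_prod_type]
            have : ∀ s : S, ∑ a, |(f t s - g t s) * pihat s a| = |f t s - g t s| := by
              intro s
              have : ∀ a, |(f t s - g t s) * pihat s a| = |f t s - g t s| * pihat s a := by
                intro a; rw [abs_mul, abs_of_nonneg (hphat0 s a)]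
              simp only [this]
              rw [← Finset.mul_sum, hphat1, mul_one]
            simp only [this]
            show (1/2) * D t = D t / 2; ring
    linarith
  -- sum of E is at most H * ε
  have hEsum : ∑ u ∈ Finset.range H, E u ≤ (H : ℝ) * ε := by
    have hHpos : (0:ℝ) < H := Nat.cast_pos.mpr hH
    have := hTV
    rw [div_mul_eq_mul_div, one_mul, div_le_iff₀ hHpos] at this
    calc ∑ u ∈ Finset.range H, E u ≤ ε * H := this
      _ = (H : ℝ) * ε := by ring
  -- bound by H² ε
  have hgap2 : expReturn P R pistar init H - expReturn P R pihat init H ≤ (H : ℝ)^2 * ε := by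
    unfold expReturn
    rw [← Finset.sum_sub_distrib]
    calc ∑ t ∈ Finset.range H, ((∑ s, ∑ a, f t s * pistar s a * R s a)
          - (∑ s, ∑ a, g t s * pihat s a * R s a))
        ≤ ∑ t ∈ Finset.range H, (E t + D t / 2) :=
          Finset.sum_le_sum fun t _ => hstep t
      _ ≤ ∑ t ∈ Finset.range H, (∑ u ∈ Finset.range (t+1), E u) := by
          apply Finset.sum_le_sum
          intro t _
          have := hDbound t
          rw [Finset.sum_range_succ]
          linarith
      _ ≤ ∑ t ∈ Finset.range H, (∑ u ∈ Finset.range H, E u) := by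
          apply Finset.sum_le_sum
          intro t ht
          apply Finset.sum_le_sum_of_subset_of_nonneg
          · exact Finset.range_subset_range.mpr (Finset.mem_range.mp ht)
          · intro u _ _; exact hE0 u
      _ = (H : ℝ) * ∑ u ∈ Finset.range H, E u := by
          rw [Finset.sum_const, Finset.card_range, nsmul_eq_mul]
      _ ≤ (H : ℝ) * ((H : ℝ) * ε) := by
          apply mul_le_mul_of_nonneg_left hEsum (Nat.cast_nonneg H)
      _ = (H : ℝ)^2 * ε := by ring
  -- bound by H
  have hgap1 : expReturn P R pistar init H - expReturn P R pihat init H ≤ (H : ℝ) := by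
    have hJstar : expReturn P R pistar init H ≤ (H : ℝ) := by
      unfold expReturn
      calc ∑ t ∈ Finset.range H, ∑ s, ∑ a, f t s * pistar s a * R s a
          ≤ ∑ t ∈ Finset.range H, (1:ℝ) := by
            apply Finset.sum_le_sum
            intro t _
            calc ∑ s, ∑ a, f t s * pistar s a * R s a
                ≤ ∑ s, ∑ a, f t s * pistar s a := by
                  apply Finset.sum_le_sum; intro s _
                  apply Finset.sum_le_sum; intro a _
                  have h := mul_nonneg (hf0 t s) (hpstar0 s a)
                  nlinarith [(hR s a).1, (hR s a).2]
              _ = ∑ s, f t s := by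
                  congr 1; ext s; rw [← Finset.mul_sum, hpstar1, mul_one]
              _ = 1 := hf1 t
        _ = (H : ℝ) := by rw [Finset.sum_const, Finset.card_range, nsmul_eq_mul, mul_one]
    have hJhat : 0 ≤ expReturn P R pihat init H := by
      unfold expReturn
      apply Finset.sum_nonneg; intro t _
      apply Finset.sum_nonneg; intro s _
      apply Finset.sum_nonneg; intro a _
      exact mul_nonneg (mul_nonneg (hg0 t s) (hphat0 s a)) (hR s a).1
    linarith
  exact le_min hgap1 hgap2
end

section
/- Combining the width bound with the imitation-learning reduction: if for all states s the MCNN policy class satisfies max over parameters of per-action probability deviation at most L·(1 − e^{−λ d^I_B}), and the expert policy is realizable within the class, then the sub-optimality gap of a learned MCNN policy satisfies J(π*) − J(π̂) ≤ min{H, H²·|A|·L·(1 − e^{−λ·d^I_B})}. -/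
open Finset

section MDP

variable {S A : Type*} [Fintype S] [Fintype A]

theorem stateDist_nonneg {P : S → A → S → ℝ} (hP0 : ∀ s a s', 0 ≤ P s a s')
    {π : S → A → ℝ} (hπ0 : ∀ s a, 0 ≤ π s a) {init : S → ℝ} (hinit0 : ∀ s, 0 ≤ init s)
    (t : ℕ) (s : S) : 0 ≤ stateDist P π init t s := by
  induction t generalizing s with
  | zero => exact hinit0 s
  | succ t ih =>
    exact sum_nonneg fun s' _ => sum_nonneg fun a _ =>
      mul_nonneg (mul_nonneg (ih s') (hπ0 s' a)) (hP0 s' a s)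

theorem sum_stateDist {P : S → A → S → ℝ} (hP1 : ∀ s a, ∑ s', P s a s' = 1)
    {π : S → A → ℝ} (hπ1 : ∀ s, ∑ a, π s a = 1) {init : S → ℝ} (hinit1 : ∑ s, init s = 1)
    (t : ℕ) : ∑ s, stateDist P π init t s = 1 := by
  induction t with
  | zero => exact hinit1
  | succ t ih =>
    calc ∑ s', ∑ s, ∑ a, stateDist P π init t s * π s a * P s a s'
        = ∑ s, ∑ a, stateDist P π init t s * π s a * ∑ s', P s a s' := by
          simp only [mul_sum]
          rw [sum_comm]
          exact sum_congr rfl fun s _ => sum_comm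
      _ = 1 := by simp only [hP1, mul_one, ← mul_sum, hπ1, ih]

theorem expReturn_nonneg {P : S → A → S → ℝ} (hP0 : ∀ s a s', 0 ≤ P s a s')
    {R : S → A → ℝ} (hR0 : ∀ s a, 0 ≤ R s a)
    {π : S → A → ℝ} (hπ0 : ∀ s a, 0 ≤ π s a) {init : S → ℝ} (hinit0 : ∀ s, 0 ≤ init s)
    (H : ℕ) : 0 ≤ expReturn P R π init H :=
  sum_nonneg fun t _ => sum_nonneg fun s _ => sum_nonneg fun a _ =>
    mul_nonneg (mul_nonneg (stateDist_nonneg hP0 hπ0 hinit0 t s) (hπ0 s a)) (hR0 s a)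

theorem expReturn_le_horizon {P : S → A → S → ℝ} (hP0 : ∀ s a s', 0 ≤ P s a s')
    (hP1 : ∀ s a, ∑ s', P s a s' = 1) {R : S → A → ℝ} (hR1 : ∀ s a, R s a ≤ 1)
    {π : S → A → ℝ} (hπ0 : ∀ s a, 0 ≤ π s a) (hπ1 : ∀ s, ∑ a, π s a = 1)
    {init : S → ℝ} (hinit0 : ∀ s, 0 ≤ init s) (hinit1 : ∑ s, init s = 1) (H : ℕ) :
    expReturn P R π init H ≤ H := by
  calc expReturn P R π init H
      ≤ ∑ t ∈ range H, ∑ s, ∑ a, stateDist P π init t s * π s a := by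
        refine sum_le_sum fun t _ => sum_le_sum fun s _ => sum_le_sum fun a _ => ?_
        exact mul_le_of_le_one_right
          (mul_nonneg (stateDist_nonneg hP0 hπ0 hinit0 t s) (hπ0 s a)) (hR1 s a)
    _ = H := by simp [← mul_sum, hπ1, sum_stateDist hP1 hπ1 hinit1]

theorem sum_abs_stateDist_succ_sub_le {P : S → A → S → ℝ} (hP0 : ∀ s a s', 0 ≤ P s a s')
    (hP1 : ∀ s a, ∑ s', P s a s' = 1) (π π' : S → A → ℝ) (init : S → ℝ) (t : ℕ) :
    ∑ s', |stateDist P π init (t + 1) s' - stateDist P π' init (t + 1) s'| ≤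
      ∑ s, ∑ a, |stateDist P π init t s * π s a - stateDist P π' init t s * π' s a| := by
  set d : S → A → ℝ := fun s a =>
    stateDist P π init t s * π s a - stateDist P π' init t s * π' s a
  have hsucc : ∀ s', stateDist P π init (t + 1) s' - stateDist P π' init (t + 1) s' =
      ∑ s, ∑ a, d s a * P s a s' := by
    intro s'
    simp only [stateDist, d, sub_mul, sum_sub_distrib]
  calc ∑ s', |stateDist P π init (t + 1) s' - stateDist P π' init (t + 1) s'|
      ≤ ∑ s', ∑ s, ∑ a, |d s a| * P s a s' := by
        refine sum_le_sum fun s' _ => ?_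
        rw [hsucc]
        refine (abs_sum_le_sum_abs _ _).trans (sum_le_sum fun s _ =>
          (abs_sum_le_sum_abs _ _).trans (le_of_eq (sum_congr rfl fun a _ => ?_)))
        rw [abs_mul, abs_of_nonneg (hP0 s a s')]
    _ = ∑ s, ∑ a, |d s a| * ∑ s', P s a s' := by
        simp only [mul_sum]
        rw [sum_comm]
        exact sum_congr rfl fun s _ => sum_comm
    _ = ∑ s, ∑ a, |d s a| := by simp only [hP1, mul_one]

theorem sum_abs_mul_sub_mul_le {ρ ρ' : S → ℝ} (hρ'0 : ∀ s, 0 ≤ ρ' s) (hρ'1 : ∑ s, ρ' s = 1)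
    {π π' : S → A → ℝ} (hπ0 : ∀ s a, 0 ≤ π s a) (hπ1 : ∀ s, ∑ a, π s a = 1)
    {ε : ℝ} (hε : ∀ s a, |π' s a - π s a| ≤ ε) :
    ∑ s, ∑ a, |ρ s * π s a - ρ' s * π' s a| ≤ ∑ s, |ρ s - ρ' s| + Fintype.card A * ε := by
  have hpoint : ∀ s a, |ρ s * π s a - ρ' s * π' s a| ≤ |ρ s - ρ' s| * π s a + ρ' s * ε := by
    intro s a
    have hsplit : ρ s * π s a - ρ' s * π' s a =
        (ρ s - ρ' s) * π s a + ρ' s * (π s a - π' s a) := by ring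
    rw [hsplit]
    refine (abs_add_le _ _).trans (add_le_add (le_of_eq ?_) ?_)
    · rw [abs_mul, abs_of_nonneg (hπ0 s a)]
    · rw [abs_mul, abs_of_nonneg (hρ'0 s), abs_sub_comm]
      exact mul_le_mul_of_nonneg_left (hε s a) (hρ'0 s)
  calc ∑ s, ∑ a, |ρ s * π s a - ρ' s * π' s a|
      ≤ ∑ s, ∑ a, (|ρ s - ρ' s| * π s a + ρ' s * ε) :=
        sum_le_sum fun s _ => sum_le_sum fun a _ => hpoint s a
    _ = ∑ s, |ρ s - ρ' s| + Fintype.card A * ε := by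
        simp only [sum_add_distrib, ← mul_sum, hπ1, mul_one, sum_const, card_univ, nsmul_eq_mul,
          ← sum_mul, hρ'1, one_mul]

section Imitation

variable {P : S → A → S → ℝ} {init : S → ℝ} {π π' : S → A → ℝ} {ε : ℝ}

theorem sum_abs_stateDist_sub_le (hP0 : ∀ s a s', 0 ≤ P s a s')
    (hP1 : ∀ s a, ∑ s', P s a s' = 1) (hinit0 : ∀ s, 0 ≤ init s) (hinit1 : ∑ s, init s = 1)
    (hπ0 : ∀ s a, 0 ≤ π s a) (hπ1 : ∀ s, ∑ a, π s a = 1)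
    (hπ'0 : ∀ s a, 0 ≤ π' s a) (hπ'1 : ∀ s, ∑ a, π' s a = 1)
    (hε : ∀ s a, |π' s a - π s a| ≤ ε) (t : ℕ) :
    ∑ s, |stateDist P π init t s - stateDist P π' init t s| ≤ t * (Fintype.card A * ε) := by
  induction t with
  | zero => simp [stateDist]
  | succ t ih =>
    calc ∑ s, |stateDist P π init (t + 1) s - stateDist P π' init (t + 1) s|
        ≤ ∑ s, ∑ a, |stateDist P π init t s * π s a - stateDist P π' init t s * π' s a| :=
          sum_abs_stateDist_succ_sub_le hP0 hP1 π π' init t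
      _ ≤ ∑ s, |stateDist P π init t s - stateDist P π' init t s| + Fintype.card A * ε :=
          sum_abs_mul_sub_mul_le (stateDist_nonneg hP0 hπ'0 hinit0 t)
            (sum_stateDist hP1 hπ'1 hinit1 t) hπ0 hπ1 hε
      _ ≤ ((t + 1 : ℕ) : ℝ) * (Fintype.card A * ε) := by push_cast; linarith

theorem sum_abs_occupancy_sub_le (hP0 : ∀ s a s', 0 ≤ P s a s')
    (hP1 : ∀ s a, ∑ s', P s a s' = 1) (hinit0 : ∀ s, 0 ≤ init s) (hinit1 : ∑ s, init s = 1)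
    (hπ0 : ∀ s a, 0 ≤ π s a) (hπ1 : ∀ s, ∑ a, π s a = 1)
    (hπ'0 : ∀ s a, 0 ≤ π' s a) (hπ'1 : ∀ s, ∑ a, π' s a = 1)
    (hε : ∀ s a, |π' s a - π s a| ≤ ε) (t : ℕ) :
    ∑ s, ∑ a, |stateDist P π init t s * π s a - stateDist P π' init t s * π' s a| ≤
      (t + 1) * (Fintype.card A * ε) := by
  have hstate := sum_abs_stateDist_sub_le hP0 hP1 hinit0 hinit1 hπ0 hπ1 hπ'0 hπ'1 hε t
  have hstep := sum_abs_mul_sub_mul_le (ρ := stateDist P π init t)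
    (stateDist_nonneg hP0 hπ'0 hinit0 t) (sum_stateDist hP1 hπ'1 hinit1 t) hπ0 hπ1 hε
  linarith

theorem expReturn_sub_le (hP0 : ∀ s a s', 0 ≤ P s a s') (hP1 : ∀ s a, ∑ s', P s a s' = 1)
    {R : S → A → ℝ} (hR : ∀ s a, R s a ∈ Set.Icc (0 : ℝ) 1)
    (hinit0 : ∀ s, 0 ≤ init s) (hinit1 : ∑ s, init s = 1)
    (hπ0 : ∀ s a, 0 ≤ π s a) (hπ1 : ∀ s, ∑ a, π s a = 1)
    (hπ'0 : ∀ s a, 0 ≤ π' s a) (hπ'1 : ∀ s, ∑ a, π' s a = 1)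
    (hε : ∀ s a, |π' s a - π s a| ≤ ε) (H : ℕ) :
    expReturn P R π init H - expReturn P R π' init H ≤ (H : ℝ) ^ 2 * Fintype.card A * ε := by
  have hocc := sum_abs_occupancy_sub_le hP0 hP1 hinit0 hinit1 hπ0 hπ1 hπ'0 hπ'1 hε
  -- the occupancy bound at time `0` has a nonnegative left-hand side
  have hAε : 0 ≤ Fintype.card A * ε := by
    simpa using (sum_nonneg fun s _ => sum_nonneg fun a _ => abs_nonneg _).trans (hocc 0)
  calc expReturn P R π init H - expReturn P R π' init H
      = ∑ t ∈ range H, ∑ s, ∑ a,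
          (stateDist P π init t s * π s a - stateDist P π' init t s * π' s a) * R s a := by
        simp only [expReturn, ← sum_sub_distrib, sub_mul]
    _ ≤ ∑ t ∈ range H, ∑ s, ∑ a,
          |stateDist P π init t s * π s a - stateDist P π' init t s * π' s a| := by
        refine sum_le_sum fun t _ => sum_le_sum fun s _ => sum_le_sum fun a _ => ?_
        exact (le_abs_self _).trans (by
          rw [abs_mul, abs_of_nonneg (hR s a).1]
          exact mul_le_of_le_one_right (abs_nonneg _) (hR s a).2)
    _ ≤ ∑ _t ∈ range H, (H : ℝ) * (Fintype.card A * ε) := by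
        refine sum_le_sum fun t ht => (hocc t).trans ?_
        have htH : (t : ℝ) + 1 ≤ H := by exact_mod_cast mem_range.mp ht
        exact mul_le_mul_of_nonneg_right htH hAε
    _ = (H : ℝ) ^ 2 * Fintype.card A * ε := by
        simp only [sum_const, card_range, nsmul_eq_mul]
        ring

end Imitation

end MDP

theorem stmt_11_general {S A : Type*} [Fintype S] [Fintype A] [MetricSpace S]
    (H : ℕ)
    (P : S → A → S → ℝ) (hP0 : ∀ s a s', 0 ≤ P s a s') (hP1 : ∀ s a, ∑ s', P s a s' = 1)
    (R : S → A → ℝ) (hR : ∀ s a, R s a ∈ Set.Icc (0 : ℝ) 1)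
    (init : S → ℝ) (hinit0 : ∀ s, 0 ≤ init s) (hinit1 : ∑ s, init s = 1)
    (M : Finset S)
    (lam L : ℝ)
    (pihat pistar : S → A → ℝ)
    (hphat0 : ∀ s a, 0 ≤ pihat s a) (hphat1 : ∀ s, ∑ a, pihat s a = 1)
    (hpstar0 : ∀ s a, 0 ≤ pistar s a) (hpstar1 : ∀ s, ∑ a, pistar s a = 1)
    (hwidth : ∀ s a, |pihat s a - pistar s a| ≤
        L * (1 - Real.exp (-lam * ⨆ y : S, ⨅ m : M, dist y (m : S)))) :
    expReturn P R pistar init H - expReturn P R pihat init H ≤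
      min (H : ℝ) ((H : ℝ) ^ 2 * (Fintype.card A : ℝ) * L *
        (1 - Real.exp (-lam * ⨆ y : S, ⨅ m : M, dist y (m : S)))) := by
  refine le_min ?_ ?_
  · have hstar := expReturn_le_horizon hP0 hP1 (fun s a => (hR s a).2) hpstar0 hpstar1
      hinit0 hinit1 H
    have hhat := expReturn_nonneg hP0 (fun s a => (hR s a).1) hphat0 hinit0 H
    linarith
  · rw [mul_assoc _ L]
    exact expReturn_sub_le hP0 hP1 hR hinit0 hinit1 hpstar0 hpstar1 hphat0 hphat1 hwidth H

/-- Combining the MCNN width bound with the imitation-learning reduction: if the learned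
MCNN policy deviates from the (realizable) expert by at most `L(1 − e^{−λ dᴵ_B})` in each
action probability at every state, then the sub-optimality gap is at most
`min {H, H²·|A|·L·(1 − e^{−λ dᴵ_B})}`, where `dᴵ_B` is the isolation radius of the
memory set `B|_S`. -/
theorem stmt_11 {S A : Type*} [Fintype S] [Fintype A] [MetricSpace S]
    (H : ℕ) (hH : 0 < H)
    (P : S → A → S → ℝ) (hP0 : ∀ s a s', 0 ≤ P s a s') (hP1 : ∀ s a, ∑ s', P s a s' = 1)
    (R : S → A → ℝ) (hR : ∀ s a, R s a ∈ Set.Icc (0 : ℝ) 1)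
    (init : S → ℝ) (hinit0 : ∀ s, 0 ≤ init s) (hinit1 : ∑ s, init s = 1)
    (M : Finset S) (hM : M.Nonempty)
    (lam L : ℝ) (hlam : 0 < lam) (hL : 0 < L)
    (pihat pistar : S → A → ℝ)
    (hphat0 : ∀ s a, 0 ≤ pihat s a) (hphat1 : ∀ s, ∑ a, pihat s a = 1)
    (hpstar0 : ∀ s a, 0 ≤ pistar s a) (hpstar1 : ∀ s, ∑ a, pistar s a = 1)
    (hwidth : ∀ s a, |pihat s a - pistar s a| ≤
        L * (1 - Real.exp (-lam * ⨆ y : S, ⨅ m : M, dist y (m : S)))) :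
    expReturn P R pistar init H - expReturn P R pihat init H ≤
      min (H : ℝ) ((H : ℝ) ^ 2 * (Fintype.card A : ℝ) * L *
        (1 - Real.exp (-lam * ⨆ y : S, ⨅ m : M, dist y (m : S)))) :=
  stmt_11_general H P hP0 hP1 R hR init hinit0 hinit1 M lam L pihat pistar hphat0 hphat1 hpstar0
    hpstar1 hwidth
end

section
/- Suppose f^θ is K-Lipschitz, σ is 1-Lipschitz with |σ| ≤ 1, the stored actions satisfy |B(s)| ≤ L, and the nearest-neighbor function f^{NN} is constant on the Voronoi cell of each memory. Then on the interior of each Voronoi cell, the MCNN f^{MC}_{θ,B} is Lipschitz with constant at most 2λL + L·K. -/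
lemma exp_lip_nonpos {s t : ℝ} (hs : s ≤ 0) (ht : t ≤ 0) :
    |Real.exp s - Real.exp t| ≤ |s - t| := by
  wlog h : t ≤ s generalizing s t
  · rw [abs_sub_comm, abs_sub_comm s t]; exact this ht hs (le_of_not_ge h)
  rw [abs_of_nonneg (sub_nonneg.2 (Real.exp_le_exp.2 h)), abs_of_nonneg (sub_nonneg.2 h)]
  have h1 : Real.exp s - Real.exp t = Real.exp s * (1 - Real.exp (t - s)) := by
    rw [mul_sub, mul_one, ← Real.exp_add]; ring_nf
  rw [h1]
  have h2 : 1 - Real.exp (t - s) ≤ s - t := by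
    have := Real.add_one_le_exp (t - s); linarith
  calc Real.exp s * (1 - Real.exp (t - s)) ≤ 1 * (s - t) := by
        apply mul_le_mul (Real.exp_le_one_iff.2 hs) h2 _ zero_le_one
        have : Real.exp (t - s) ≤ 1 := Real.exp_le_one_iff.2 (by linarith)
        linarith
    _ = s - t := one_mul _

/-- On (the interior of) a Voronoi cell of a memory, where the nearest-neighbor
prediction is the constant stored action `a` (with `|a| ≤ L`) and the
nearest-memory distance `D` is 1-Lipschitz and nonnegative, the MCNN
`x ↦ a·e^{−λ D x} + L(1 − e^{−λ D x})·σ(f^θ x)` (with `σ` 1-Lipschitz, `|σ| ≤ 1`,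
`f^θ` K-Lipschitz) is Lipschitz with constant at most `2λL + L·K`. -/
theorem stmt_19 {S : Type*} [MetricSpace S] (U : Set S)
    (lam L K : NNReal) (hlam : 0 < lam) (hL : 0 < L)
    (a : ℝ) (ha : |a| ≤ (L : ℝ))
    (D : S → ℝ) (hD : LipschitzOnWith 1 D U) (hD0 : ∀ x ∈ U, 0 ≤ D x)
    (fθ : S → ℝ) (hfθ : LipschitzOnWith K fθ U)
    (σ : ℝ → ℝ) (hσlip : LipschitzWith 1 σ) (hσbd : ∀ y, |σ y| ≤ 1) :
    LipschitzOnWith (2 * lam * L + L * K)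
      (fun x : S => a * Real.exp (-(lam : ℝ) * D x) +
        (L : ℝ) * (1 - Real.exp (-(lam : ℝ) * D x)) * σ (fθ x)) U := by
  apply LipschitzOnWith.of_dist_le_mul
  intro x hx y hy
  set Ex := Real.exp (-(lam : ℝ) * D x) with hEx
  set Ey := Real.exp (-(lam : ℝ) * D y) with hEy
  have hDlip : |D x - D y| ≤ dist x y := by
    simpa [Real.dist_eq] using hD.dist_le_mul x hx y hy
  have hE : |Ex - Ey| ≤ (lam : ℝ) * dist x y := by
    have h1 : |Ex - Ey| ≤ |(-(lam : ℝ) * D x) - (-(lam : ℝ) * D y)| :=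
      exp_lip_nonpos (by nlinarith [hD0 x hx, lam.coe_nonneg])
        (by nlinarith [hD0 y hy, lam.coe_nonneg])
    have h2 : |(-(lam : ℝ) * D x) - (-(lam : ℝ) * D y)| = (lam : ℝ) * |D x - D y| := by
      rw [show (-(lam : ℝ) * D x) - (-(lam : ℝ) * D y) = (lam : ℝ) * (D y - D x) by ring,
        abs_mul, abs_of_nonneg lam.coe_nonneg, abs_sub_comm]
    calc |Ex - Ey| ≤ (lam : ℝ) * |D x - D y| := h2 ▸ h1
      _ ≤ (lam : ℝ) * dist x y := by
          exact mul_le_mul_of_nonneg_left hDlip lam.coe_nonneg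
  have hf : |fθ x - fθ y| ≤ (K : ℝ) * dist x y := by
    simpa [Real.dist_eq] using hfθ.dist_le_mul x hx y hy
  have hσ : |σ (fθ x) - σ (fθ y)| ≤ (K : ℝ) * dist x y := by
    have := hσlip.dist_le_mul (fθ x) (fθ y)
    simp only [Real.dist_eq, NNReal.coe_one, one_mul] at this
    exact this.trans hf
  have hEx1 : Ex ≤ 1 := Real.exp_le_one_iff.2 (by nlinarith [hD0 x hx, lam.coe_nonneg])
  have hEx0 : 0 < Ex := Real.exp_pos _
  have key : |(a * Ex + (L : ℝ) * (1 - Ex) * σ (fθ x)) -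
      (a * Ey + (L : ℝ) * (1 - Ey) * σ (fθ y))|
      ≤ (2 * (lam : ℝ) * L + L * K) * dist x y := by
    have hsplit : (a * Ex + (L : ℝ) * (1 - Ex) * σ (fθ x)) -
        (a * Ey + (L : ℝ) * (1 - Ey) * σ (fθ y))
        = a * (Ex - Ey) + (L : ℝ) * ((1 - Ex) * (σ (fθ x) - σ (fθ y))
          + (Ey - Ex) * σ (fθ y)) := by ring
    rw [hsplit]
    have h1 : |a * (Ex - Ey)| ≤ (L : ℝ) * ((lam : ℝ) * dist x y) := by
      rw [abs_mul]
      exact mul_le_mul ha hE (abs_nonneg _) L.coe_nonneg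
    have h2 : |(1 - Ex) * (σ (fθ x) - σ (fθ y))| ≤ (K : ℝ) * dist x y := by
      rw [abs_mul]
      calc |1 - Ex| * |σ (fθ x) - σ (fθ y)| ≤ 1 * ((K : ℝ) * dist x y) := by
            apply mul_le_mul _ hσ (abs_nonneg _) zero_le_one
            rw [abs_le]; constructor <;> linarith
        _ = (K : ℝ) * dist x y := one_mul _
    have h3 : |(Ey - Ex) * σ (fθ y)| ≤ (lam : ℝ) * dist x y := by
      rw [abs_mul]
      calc |Ey - Ex| * |σ (fθ y)| ≤ ((lam : ℝ) * dist x y) * 1 := by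
            apply mul_le_mul _ (hσbd _) (abs_nonneg _)
            · positivity
            · rw [abs_sub_comm]; exact hE
        _ = (lam : ℝ) * dist x y := mul_one _
    calc |a * (Ex - Ey) + (L : ℝ) * ((1 - Ex) * (σ (fθ x) - σ (fθ y))
          + (Ey - Ex) * σ (fθ y))|
        ≤ |a * (Ex - Ey)| + (L : ℝ) * (|(1 - Ex) * (σ (fθ x) - σ (fθ y))|
          + |(Ey - Ex) * σ (fθ y)|) := by
          calc _ ≤ |a * (Ex - Ey)| + |(L : ℝ) * ((1 - Ex) * (σ (fθ x) - σ (fθ y))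
                + (Ey - Ex) * σ (fθ y))| := abs_add_le _ _
            _ ≤ _ := by
                have hLm : |(L : ℝ) * ((1 - Ex) * (σ (fθ x) - σ (fθ y))
                    + (Ey - Ex) * σ (fθ y))| ≤ (L : ℝ) * (|(1 - Ex) * (σ (fθ x) - σ (fθ y))|
                    + |(Ey - Ex) * σ (fθ y)|) := by
                  rw [abs_mul (L : ℝ), abs_of_nonneg L.coe_nonneg]
                  exact mul_le_mul_of_nonneg_left (abs_add_le _ _) L.coe_nonneg
                linarith
      _ ≤ (L : ℝ) * ((lam : ℝ) * dist x y) + (L : ℝ) * ((K : ℝ) * dist x y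
          + (lam : ℝ) * dist x y) := by gcongr
      _ = (2 * (lam : ℝ) * L + L * K) * dist x y := by ring
  simpa [Real.dist_eq, NNReal.coe_add, NNReal.coe_mul] using key
end
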